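/- Let G: ℝ^k → ℝ^d be an n-layer ReLU network with no offsets, G(x) = σ∘(W_n σ∘(W_{n-1} ⋯ σ∘(W_1 x))), where each layer has at most d nodes. Then ℝ^k can be partitioned into at most (d^k + 1)^n ≤ (2d)^{kn} pieces such that G restricted to each piece coincides with a linear map from ℝ^k to ℝ^d. -/

import Mathlib

/-!
On the set of inputs where every neuron of the first `n` layers has a fixed sign, the network
is linear, so it suffices to count how many linear maps are needed. If the first `n` layers
agree pointwise with one of `N` linear maps `L`, the next layer `x ↦ σ(W L x)` is linear on each
cell of the arrangement of the `≤ d` hyperplanes `(W L)ⱼ = 0` in `ℝ^k`, i.e. on each set where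
the sign pattern `(0 ≤ (W L x)ⱼ)ⱼ` is constant. By the classical Schläfli–Cover count, `m`
hyperplanes through the origin in a space of dimension `r` realize at most `∑_{i ≤ r} C(m, i)`
sign patterns: deleting the last hyperplane `φ = 0`, a pattern of the others realized on both
sides of it is, by convexity of the cells, also realized on `ker φ`, which has dimension
`r - 1`. Since `∑_{i ≤ k} C(d, i) ≤ d^k + 1`, each layer multiplies the number of linear maps
by at most `d^k + 1`.
-/

/-- Output of the first `n` layers of a ReLU network with no offsets:
`reluNet dm W n x = σ∘(W_{n-1} σ∘(⋯ σ∘(W_0 x)))` where `σ(t) = max t 0` is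
applied entrywise. -/
noncomputable def reluNet (dm : ℕ → ℕ)
    (W : ∀ i : ℕ, Matrix (Fin (dm (i + 1))) (Fin (dm i)) ℝ) :
    (n : ℕ) → (Fin (dm 0) → ℝ) → Fin (dm n) → ℝ
  | 0, x => x
  | (n + 1), x => fun j => max ((W n).mulVec (reluNet dm W n x) j) 0

open Finset Module

lemma Nat.choose_succ_le_pow_mul (e k : ℕ) (hk : 1 ≤ k) :
    (e + 1).choose (k + 1) ≤ (e + 1) ^ k * e := by
  obtain ⟨j, rfl⟩ := Nat.exists_eq_add_of_le' hk
  calc (e + 1).choose (j + 1 + 1) ≤ (e + 1).choose (j + 1 + 1) * (j + 1 + 1) :=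
        Nat.le_mul_of_pos_right _ (by omega)
    _ = (e + 1) * e.choose (j + 1) := (Nat.add_one_mul_choose_eq e (j + 1)).symm
    _ ≤ (e + 1) * e ^ (j + 1) := Nat.mul_le_mul_left _ (Nat.choose_le_pow e (j + 1))
    _ = (e + 1) * e ^ j * e := by ring
    _ ≤ (e + 1) * (e + 1) ^ j * e := by gcongr; omega
    _ = (e + 1) ^ (j + 1) * e := by ring

lemma Nat.sum_range_choose_le_pow_add_one {d : ℕ} (hd : 1 ≤ d) (k : ℕ) :
    ∑ i ∈ range (k + 1), d.choose i ≤ d ^ k + 1 := by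
  obtain ⟨e, rfl⟩ := Nat.exists_eq_add_of_le' hd
  induction k with
  | zero => simp
  | succ k ih =>
    rw [sum_range_succ]
    rcases Nat.eq_zero_or_pos k with rfl | hk
    · simp [add_comm]
    · calc _ ≤ (e + 1) ^ k + 1 + (e + 1) ^ k * e :=
          add_le_add ih (Nat.choose_succ_le_pow_mul e k hk)
        _ = (e + 1) ^ (k + 1) + 1 := by ring

lemma Nat.pow_add_one_le_two_mul_pow {d k : ℕ} (hd : 1 ≤ d) (hk : 1 ≤ k) :
    d ^ k + 1 ≤ (2 * d) ^ k :=
  calc d ^ k + 1 ≤ 2 * d ^ k := by have := Nat.one_le_pow k d hd; omega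
    _ ≤ 2 ^ k * d ^ k := Nat.mul_le_mul_right _ (by simpa using Nat.pow_le_pow_right two_pos hk)
    _ = (2 * d) ^ k := (mul_pow 2 d k).symm

lemma Nat.sum_range_choose_succ (m r : ℕ) :
    ∑ i ∈ range (r + 1), (m + 1).choose i =
      ∑ i ∈ range (r + 1), m.choose i + ∑ i ∈ range r, m.choose i := by
  rw [sum_range_succ', sum_range_succ' (fun i => m.choose i)]
  simp only [Nat.choose_succ_succ, Nat.choose_zero_right, sum_add_distrib]
  ring

lemma ncard_le_ncard_image_init_add {m : ℕ} (S : Set (Fin (m + 1) → Bool)) :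
    S.ncard ≤ (Fin.init '' S).ncard +
      {q | Fin.snoc q true ∈ S ∧ Fin.snoc q false ∈ S}.ncard := by
  set T := {q : Fin m → Bool | Fin.snoc q true ∈ S}
  set F := {q : Fin m → Bool | Fin.snoc q false ∈ S}
  have hS : S ⊆ (Fin.snoc · true) '' T ∪ (Fin.snoc · false) '' F := by
    intro p hp
    have hp' := Fin.snoc_init_self p
    cases hlast : p (Fin.last m) <;> rw [hlast] at hp'
    · exact Or.inr ⟨_, show _ ∈ S by rwa [hp'], hp'⟩
    · exact Or.inl ⟨_, show _ ∈ S by rwa [hp'], hp'⟩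
  have hTF : T ∪ F ⊆ Fin.init '' S := by
    rintro q (hq | hq) <;> exact ⟨_, hq, Fin.init_snoc _ _⟩
  calc S.ncard ≤ T.ncard + F.ncard :=
        (Set.ncard_le_ncard hS).trans <| (Set.ncard_union_le _ _).trans <|
          add_le_add (Set.ncard_image_le) (Set.ncard_image_le)
    _ = (T ∪ F).ncard + (T ∩ F).ncard := (Set.ncard_union_add_ncard_inter _ _).symm
    _ ≤ _ := Nat.add_le_add_right (Set.ncard_le_ncard hTF) _

section SignPattern

variable {𝕜 V : Type*} [Semiring 𝕜] [LinearOrder 𝕜] [AddCommMonoid V] [Module 𝕜 V]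

def signPattern {ι : Type*} (f : ι → V →ₗ[𝕜] 𝕜) (x : V) : ι → Bool :=
  fun j => decide (0 ≤ f j x)

def reluMask {ι : Type*} (p : ι → Bool) : (ι → 𝕜) →ₗ[𝕜] ι → 𝕜 :=
  LinearMap.pi fun j => if p j then LinearMap.proj j else 0

lemma max_zero_eq_reluMask_signPattern {ι : Type*} (M : V →ₗ[𝕜] ι → 𝕜) (x : V) :
    (fun j => max (M x j) 0) =
      reluMask (signPattern (fun j => LinearMap.proj j ∘ₗ M) x) (M x) := by
  ext j
  by_cases h : 0 ≤ M x j <;> simp [reluMask, signPattern, h, le_of_not_ge]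

end SignPattern

section PiecewiseLinear

variable {𝕜 V E : Type*} [Semiring 𝕜] [AddCommMonoid V] [Module 𝕜 V]
  [AddCommMonoid E] [Module 𝕜 E]

variable (𝕜) in
/-- The piece of `L ∈ s` is the set of points at which `L` is the map chosen for `f`. -/
def IsPiecewiseLinear (N : ℕ) (f : V → E) : Prop :=
  ∃ s : Finset (V →ₗ[𝕜] E), s.card ≤ N ∧ ∀ x, ∃ L ∈ s, f x = L x

lemma IsPiecewiseLinear.mono {N N' : ℕ} {f : V → E} (hf : IsPiecewiseLinear 𝕜 N f)
    (hN : N ≤ N') : IsPiecewiseLinear 𝕜 N' f :=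
  let ⟨s, hs, hfs⟩ := hf
  ⟨s, hs.trans hN, hfs⟩

lemma IsPiecewiseLinear.exists_partition {N : ℕ} {f : V → E} (hf : IsPiecewiseLinear 𝕜 N f) :
    ∃ (M : ℕ) (P : Fin M → Set V) (A : Fin M → V →ₗ[𝕜] E), M ≤ N ∧
      (∀ x, ∃ i, x ∈ P i) ∧ (∀ i j, i ≠ j → Disjoint (P i) (P j)) ∧
      ∀ i, ∀ x ∈ P i, f x = A i x := by
  obtain ⟨s, hs, hfs⟩ := hf
  choose L hLs hL using hfs
  refine ⟨s.card, fun i => {x | L x = s.equivFin.symm i}, fun i => s.equivFin.symm i, hs,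
    fun x => ⟨s.equivFin ⟨L x, hLs x⟩, by simp⟩, fun i j hij => ?_, fun i x hx => ?_⟩
  · refine Set.disjoint_left.2 fun x hi hj => hij ?_
    exact s.equivFin.symm.injective (Subtype.ext (hi.symm.trans hj))
  · rw [hL x, hx]

end PiecewiseLinear

section OrderedField

variable {𝕜 V E : Type*} [Field 𝕜] [LinearOrder 𝕜] [IsStrictOrderedRing 𝕜]
  [AddCommGroup V] [Module 𝕜 V] [AddCommGroup E] [Module 𝕜 E]

lemma convex_signPattern_preimage {ι : Type*} (f : ι → V →ₗ[𝕜] 𝕜) (p : ι → Bool) :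
    Convex 𝕜 (signPattern f ⁻¹' {p}) := by
  have hcell : signPattern f ⁻¹' {p} = ⋂ j, {x | decide (0 ≤ f j x) = p j} := by
    ext x; simp [signPattern, funext_iff]
  rw [hcell]
  refine convex_iInter fun j => ?_
  cases p j
  · simpa using convex_halfSpace_lt (f j).isLinear 0
  · simpa using convex_halfSpace_ge (f j).isLinear 0

lemma LinearMap.exists_mem_segment_eq_zero (φ : V →ₗ[𝕜] 𝕜) {x y : V} (hx : 0 ≤ φ x)
    (hy : φ y < 0) : ∃ z ∈ segment 𝕜 x y, φ z = 0 := by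
  have hxy : 0 < φ x - φ y := by linarith
  refine ⟨(-φ y / (φ x - φ y)) • x + (φ x / (φ x - φ y)) • y,
    ⟨_, _, div_nonneg (by linarith) hxy.le, div_nonneg hx hxy.le, ?_, rfl⟩, ?_⟩
  · field_simp; ring
  · simp only [map_add, map_smul, smul_eq_mul]; field_simp; ring

lemma signPattern_mem_range_domRestrict_ker {ι : Type*} (f : ι → V →ₗ[𝕜] 𝕜)
    (φ : V →ₗ[𝕜] 𝕜) {x y : V} (hx : 0 ≤ φ x) (hy : φ y < 0)
    (hxy : signPattern f x = signPattern f y) :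
    signPattern f x ∈ Set.range (signPattern fun j => (f j).domRestrict (LinearMap.ker φ)) := by
  obtain ⟨z, hz, hφz⟩ := φ.exists_mem_segment_eq_zero hx hy
  exact ⟨⟨z, hφz⟩, (convex_signPattern_preimage f _).segment_subset rfl hxy.symm hz⟩

theorem ncard_range_signPattern_le [FiniteDimensional 𝕜 V] {m : ℕ} (f : Fin m → V →ₗ[𝕜] 𝕜) :
    (Set.range (signPattern f)).ncard ≤ ∑ i ∈ range (finrank 𝕜 V + 1), m.choose i := by
  induction m generalizing V with
  | zero => exact (Set.ncard_le_one_of_subsingleton _).trans (by simp [sum_range_succ'])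
  | succ m ih =>
    set φ := f (Fin.last m)
    set D := {q | Fin.snoc q true ∈ Set.range (signPattern f) ∧
      Fin.snoc q false ∈ Set.range (signPattern f)}
    have hinit : Fin.init '' Set.range (signPattern f) ⊆ Set.range (signPattern (Fin.init f)) := by
      rintro _ ⟨_, ⟨x, rfl⟩, rfl⟩
      exact ⟨x, rfl⟩
    have hD : ∀ q ∈ D, ∃ x y, 0 ≤ φ x ∧ φ y < 0 ∧
        signPattern (Fin.init f) x = q ∧ signPattern (Fin.init f) y = q := by
      rintro q ⟨⟨x, hx⟩, ⟨y, hy⟩⟩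
      refine ⟨x, y, ?_, ?_, (congrArg Fin.init hx).trans (Fin.init_snoc _ _),
        (congrArg Fin.init hy).trans (Fin.init_snoc _ _)⟩
      · simpa [signPattern, φ] using congrFun hx (Fin.last m)
      · simpa [signPattern, φ] using congrFun hy (Fin.last m)
    have hDcard : D.ncard ≤ ∑ i ∈ range (finrank 𝕜 V), m.choose i := by
      by_cases hφ : φ = 0
      · have hD_empty : D = ∅ := Set.eq_empty_of_forall_notMem fun q hq => by
          obtain ⟨x, y, -, hy, -⟩ := hD q hq
          simp [hφ] at hy
        simp [hD_empty]
      · rw [← Module.Dual.finrank_ker_add_one_of_ne_zero hφ]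
        refine (Set.ncard_le_ncard fun q hq => ?_).trans
          (ih fun j => (Fin.init f j).domRestrict (LinearMap.ker φ))
        obtain ⟨x, y, hx, hy, rfl, hyx⟩ := hD q hq
        exact signPattern_mem_range_domRestrict_ker (Fin.init f) φ hx hy hyx.symm
    calc _ ≤ (Fin.init '' Set.range (signPattern f)).ncard + D.ncard :=
          ncard_le_ncard_image_init_add _
      _ ≤ ∑ i ∈ range (finrank 𝕜 V + 1), m.choose i + ∑ i ∈ range (finrank 𝕜 V), m.choose i :=
          add_le_add ((Set.ncard_le_ncard hinit).trans (ih _)) hDcard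
      _ = _ := (Nat.sum_range_choose_succ m _).symm

lemma IsPiecewiseLinear.relu_comp [FiniteDimensional 𝕜 V] {N m : ℕ} {f : V → E}
    (hf : IsPiecewiseLinear 𝕜 N f) (W : E →ₗ[𝕜] Fin m → 𝕜) :
    IsPiecewiseLinear 𝕜 (N * ∑ i ∈ range (finrank 𝕜 V + 1), m.choose i)
      (fun x j => max (W (f x) j) 0) := by
  classical
  obtain ⟨s, hs, hfs⟩ := hf
  let patterns (L : V →ₗ[𝕜] E) :=
    Set.range (signPattern fun j => LinearMap.proj j ∘ₗ W ∘ₗ L)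
  let pieces (L : V →ₗ[𝕜] E) : Finset (V →ₗ[𝕜] Fin m → 𝕜) :=
    (Set.toFinite (patterns L)).toFinset.image fun p => reluMask p ∘ₗ W ∘ₗ L
  refine ⟨s.biUnion pieces, ?_, fun x => ?_⟩
  · refine (card_biUnion_le_card_mul _ _ _ fun L _ => ?_).trans (Nat.mul_le_mul_right _ hs)
    calc (pieces L).card ≤ (patterns L).ncard := by
          rw [Set.ncard_eq_toFinset_card _ (Set.toFinite _)]; exact card_image_le
      _ ≤ _ := ncard_range_signPattern_le _
  · obtain ⟨L, hL, hx⟩ := hfs x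
    have hpat : signPattern (fun j => LinearMap.proj j ∘ₗ W ∘ₗ L) x ∈
        (Set.toFinite (patterns L)).toFinset :=
      (Set.Finite.mem_toFinset _).2 ⟨x, rfl⟩
    refine ⟨_, mem_biUnion.2 ⟨L, hL, mem_image.2 ⟨_, hpat, rfl⟩⟩, ?_⟩
    dsimp only
    rw [hx]
    exact max_zero_eq_reluMask_signPattern (W ∘ₗ L) x

end OrderedField

lemma isPiecewiseLinear_reluNet {d : ℕ} (hd : 1 ≤ d) {dm : ℕ → ℕ} (hdim : ∀ i, dm i ≤ d)
    (W : ∀ i : ℕ, Matrix (Fin (dm (i + 1))) (Fin (dm i)) ℝ) (n : ℕ) :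
    IsPiecewiseLinear ℝ ((d ^ dm 0 + 1) ^ n) (reluNet dm W n) := by
  induction n with
  | zero => exact ⟨{LinearMap.id}, by simp, fun x => ⟨_, mem_singleton_self _, rfl⟩⟩
  | succ n ih =>
    refine (ih.relu_comp (W n).mulVecLin).mono ?_
    rw [finrank_fin_fun, pow_succ]
    refine Nat.mul_le_mul_left _ ((sum_le_sum fun i _ => ?_).trans
      (Nat.sum_range_choose_le_pow_add_one hd _))
    exact Nat.choose_le_choose i (hdim (n + 1))

theorem stmt_2_general (k d n : ℕ) (hk : 1 ≤ k) (hd : 1 ≤ d) (dm : ℕ → ℕ)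
    (hdm0 : dm 0 = k) (hdim : ∀ i, dm i ≤ d)
    (W : ∀ i : ℕ, Matrix (Fin (dm (i + 1))) (Fin (dm i)) ℝ) :
    ∃ (N : ℕ) (P : Fin N → Set (Fin (dm 0) → ℝ))
      (A : Fin N → ((Fin (dm 0) → ℝ) →ₗ[ℝ] (Fin (dm n) → ℝ))),
      N ≤ (d ^ k + 1) ^ n ∧ (d ^ k + 1) ^ n ≤ (2 * d) ^ (k * n) ∧
      (∀ x, ∃ i, x ∈ P i) ∧
      (∀ i j, i ≠ j → Disjoint (P i) (P j)) ∧
      (∀ i, ∀ x ∈ P i, reluNet dm W n x = A i x) := by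
  obtain ⟨N, P, A, hN, hcover, hdisj, hagree⟩ :=
    (isPiecewiseLinear_reluNet hd hdim W n).exists_partition
  refine ⟨N, P, A, hdm0 ▸ hN, ?_, hcover, hdisj, hagree⟩
  rw [pow_mul]
  exact Nat.pow_le_pow_left (Nat.pow_add_one_le_two_mul_pow hd hk) n

/-- an `n`-layer ReLU network `G : ℝ^k → ℝ^d` with no offsets and at
most `d` nodes per layer is piecewise linear: `ℝ^k` can be partitioned into at
most `(d^k + 1)^n ≤ (2d)^(k n)` pieces on each of which `G` coincides with a
linear map. -/
theorem stmt_2 (k d n : ℕ) (hk : 1 ≤ k) (hd : 1 ≤ d) (dm : ℕ → ℕ)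
    (hdm0 : dm 0 = k) (hdmn : dm n = d) (hdim : ∀ i, dm i ≤ d)
    (W : ∀ i : ℕ, Matrix (Fin (dm (i + 1))) (Fin (dm i)) ℝ) :
    ∃ (N : ℕ) (P : Fin N → Set (Fin (dm 0) → ℝ))
      (A : Fin N → ((Fin (dm 0) → ℝ) →ₗ[ℝ] (Fin (dm n) → ℝ))),
      N ≤ (d ^ k + 1) ^ n ∧ (d ^ k + 1) ^ n ≤ (2 * d) ^ (k * n) ∧
      (∀ x, ∃ i, x ∈ P i) ∧
      (∀ i j, i ≠ j → Disjoint (P i) (P j)) ∧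
      (∀ i, ∀ x ∈ P i, reluNet dm W n x = A i x) :=
  stmt_2_general k d n hk hd dm hdm0 hdim W
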